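/- arXiv:1709.04737 — 2 statements merged into one kernel-verified Lean document; each statement's English description precedes it below -/
import Mathlib

section
/- Let 0 < r₁ < r₂, λ < 0, α > 0, and let z : [r₁, r₂] → ℝ be a C¹ function satisfying z'(r) + z(r)² + z(r)/r + λ = 0 on [r₁, r₂], with z(r₁) = −α and z(r₂) = α. Then z'(r₂) > 0, i.e. λ + α² + α/r₂ < 0. -/
/-!
Write `u = z - α`. The Riccati equation becomes the linear equation
`u' = -(z + α + 1/r) u - (λ + α² + α/r)`, and if `λ + α² + α/r₂ ≥ 0` the forcing term is
nonpositive on `[r₁, r₂]`. A linear differential inequality `u' ≤ -g u` with `g` bounded above by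
`L` keeps `u` below the negative barrier `u(r₁) e^{-L (r - r₁)}`, so `u(r₂) < 0`, contradicting
`z(r₂) = α`.
-/

open Set Real

theorem le_mul_exp_of_deriv_le_neg_mul {u u' g : ℝ → ℝ} {a b L : ℝ}
    (hu : ContinuousOn u (Icc a b)) (hu' : ∀ x ∈ Ico a b, HasDerivWithinAt u (u' x) (Ici x) x)
    (hgL : ∀ x ∈ Ico a b, g x < L) (hineq : ∀ x ∈ Ico a b, u' x ≤ -(g x * u x))
    (ha : u a < 0) : ∀ x ∈ Icc a b, u x ≤ u a * exp (-L * (x - a)) := by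
  have hB (x : ℝ) : HasDerivAt (fun x => u a * exp (-L * (x - a)))
      (-L * (u a * exp (-L * (x - a)))) x := by
    refine ((((hasDerivAt_id x).sub_const a).const_mul (-L)).exp.const_mul (u a)).congr_deriv ?_
    simp only [id_eq]; ring
  refine image_le_of_deriv_right_lt_deriv_boundary hu hu' (by simp) hB ?_
  intro x hx hux
  have hneg : u x < 0 := hux ▸ mul_neg_of_neg_of_pos ha (exp_pos _)
  calc u' x ≤ -(g x * u x) := hineq x hx
    _ < -L * u x := by nlinarith [hgL x hx]
    _ = -L * (u a * exp (-L * (x - a))) := by rw [hux]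

theorem riccati_derivative_positive_at_outer_radius_general
    (r₁ r₂ lam α : ℝ) (hr₁ : 0 < r₁) (hr : r₁ < r₂) (hα : 0 < α)
    (z z' : ℝ → ℝ)
    (hz : ∀ r ∈ Icc r₁ r₂, HasDerivAt z (z' r) r)
    (hODE : ∀ r ∈ Icc r₁ r₂, z' r + (z r) ^ 2 + z r / r + lam = 0)
    (hb1 : z r₁ = -α) (hb2 : z r₂ = α) :
    z' r₂ > 0 ∧ lam + α ^ 2 + α / r₂ < 0 := by
  have hr₂ : r₂ ∈ Icc r₁ r₂ := ⟨hr.le, le_rfl⟩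
  have hz'r₂ : z' r₂ = -(lam + α ^ 2 + α / r₂) := by linarith [hb2 ▸ hODE r₂ hr₂]
  suffices hK : lam + α ^ 2 + α / r₂ < 0 from ⟨by linarith, hK⟩
  by_contra! hK
  have hzc : ContinuousOn z (Icc r₁ r₂) := fun r hr => (hz r hr).continuousAt.continuousWithinAt
  set g : ℝ → ℝ := fun r => z r + α + 1 / r
  have hgc : ContinuousOn g (Icc r₁ r₂) :=
    (hzc.add continuousOn_const).add
      (continuousOn_const.div continuousOn_id fun r hr => (hr₁.trans_le hr.1).ne')
  obtain ⟨M, hM⟩ := isCompact_Icc.bddAbove_image hgc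
  have hineq (r) (hr : r ∈ Ico r₁ r₂) : z' r ≤ -(g r * (z r - α)) := by
    have hr0 : 0 < r := hr₁.trans_le hr.1
    have : α / r₂ ≤ α / r := div_le_div_of_nonneg_left hα.le hr0 hr.2.le
    have : -(g r * (z r - α)) = -(z r) ^ 2 - z r / r + α ^ 2 + α / r := by simp only [g]; ring
    linarith [hODE r (Ico_subset_Icc_self hr)]
  have hbarrier := le_mul_exp_of_deriv_le_neg_mul (u := fun r => z r - α) (g := g) (L := M + 1)
    (hzc.sub continuousOn_const)
    (fun r hr => ((hz r (Ico_subset_Icc_self hr)).sub_const α).hasDerivWithinAt)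
    (fun r hr => (hM (mem_image_of_mem g (Ico_subset_Icc_self hr))).trans_lt (lt_add_one M))
    hineq (by linarith) r₂ hr₂
  simp only [hb1, hb2, sub_self] at hbarrier
  nlinarith [exp_pos (-(M + 1) * (r₂ - r₁))]

/-- if `z` is C¹ on `[r₁,r₂]` and satisfies the Riccati equation
`z' + z² + z/r + λ = 0` there, with `z(r₁) = −α` and `z(r₂) = α` (λ < 0, α > 0),
then `z'(r₂) > 0`, i.e. `λ + α² + α/r₂ < 0`. -/
theorem riccati_derivative_positive_at_outer_radius
    (r₁ r₂ lam α : ℝ) (hr₁ : 0 < r₁) (hr : r₁ < r₂) (hlam : lam < 0) (hα : 0 < α)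
    (z z' : ℝ → ℝ)
    (hz : ∀ r ∈ Icc r₁ r₂, HasDerivAt z (z' r) r)
    (hz'cont : ContinuousOn z' (Icc r₁ r₂))
    (hODE : ∀ r ∈ Icc r₁ r₂, z' r + (z r) ^ 2 + z r / r + lam = 0)
    (hb1 : z r₁ = -α) (hb2 : z r₂ = α) :
    z' r₂ > 0 ∧ lam + α ^ 2 + α / r₂ < 0 :=
  riccati_derivative_positive_at_outer_radius_general r₁ r₂ lam α hr₁ hr hα z z' hz hODE hb1 hb2
end

section
/- Let 0 < r₁ < r₂, λ < 0, α > 0, and let z : [r₁, r₂] → ℝ be C¹ with z' = −z² − z/r − λ, z(r₁) = −α, z(r₂) = α. Let ξ ∈ (r₁, r₂) satisfy z(ξ) = 0 and z(ρ) ≥ 0 for ρ ∈ [ξ, r₂]. Then z'(ρ) > 0 for all ρ ∈ [ξ, r₂]; in particular z is strictly increasing on [ξ, r₂]. -/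
open Set

/-! If `z'` first became nonpositive at some `ρ > ξ`, then `z ρ > 0` (at a zero of `z` the
equation forces `z' = -λ > 0`), and differentiating the Riccati equation gives
`z'' = -2 z z' - z' / ρ + z / ρ² > 0` there, so `z'` would be negative just before `ρ`. -/

theorem pos_on_Icc_of_hasDerivWithinAt_pos_of_nonpos {f : ℝ → ℝ} {a b : ℝ}
    (hf : ContinuousOn f (Icc a b)) (ha : 0 < f a)
    (hderiv : ∀ x ∈ Ioc a b, f x ≤ 0 → ∃ d > 0, HasDerivWithinAt f d (Icc a x) x) :
    ∀ x ∈ Icc a b, 0 < f x := by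
  by_contra! ⟨x, hx, hfx⟩
  have hclosed : IsClosed (Icc a b ∩ f ⁻¹' Iic 0) :=
    hf.preimage_isClosed_of_isClosed isClosed_Icc isClosed_Iic
  obtain ⟨x₀, ⟨hx₀, hfx₀⟩, hleast⟩ :=
    (isCompact_Icc.of_isClosed_subset hclosed inter_subset_left).exists_isLeast ⟨x, hx, hfx⟩
  have hax₀ : a < x₀ := hx₀.1.lt_of_ne (by rintro rfl; exact hfx₀.not_gt ha)
  obtain ⟨d, hd, hf'⟩ := hderiv x₀ ⟨hax₀, hx₀.2⟩ hfx₀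
  have hmin : IsMinOn f (Icc a x₀) x₀ := fun t ht ↦ show f x₀ ≤ f t from
    not_lt.mp fun hlt ↦ hlt.ne <| by
      rw [le_antisymm ht.2 (hleast ⟨⟨ht.1, ht.2.trans hx₀.2⟩, (hlt.trans_le hfx₀).le⟩)]
  -- the leftward direction `a - x₀ < 0` is tangent to `[a, x₀]`, so `d * (a - x₀) ≥ 0`
  have hcone : a - x₀ ∈ posTangentConeAt (Icc a x₀) x₀ :=
    sub_mem_posTangentConeAt_of_segment_subset
      (by rw [segment_symm]; exact segment_subset_Icc hax₀.le)
  have hdir := hmin.localize.hasFDerivWithinAt_nonneg hf' hcone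
  rw [ContinuousLinearMap.toSpanSingleton_apply, smul_eq_mul] at hdir
  nlinarith

theorem hasDerivWithinAt_of_riccati {z z' : ℝ → ℝ} {lam r : ℝ} {s : Set ℝ}
    (hODE : ∀ x ∈ s, z' x = -(z x) ^ 2 - z x / x - lam) (hrs : r ∈ s) (hr : r ≠ 0)
    (hz : HasDerivAt z (z' r) r) :
    HasDerivWithinAt z' (-(2 * z r * z' r) - z' r / r + z r / r ^ 2) s r := by
  have hrhs := ((hz.pow 2).neg.sub (hz.div (hasDerivAt_id r) hr)).sub_const lam
  refine (hrhs.hasDerivWithinAt.congr_of_mem hODE hrs).congr_deriv ?_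
  simp only [id, Nat.cast_ofNat, Nat.add_one_sub_one, pow_one, mul_one]
  field_simp
  ring

theorem riccati_deriv_pos_of_eq_zero {z z' : ℝ → ℝ} {lam r : ℝ}
    (hODE : z' r = -(z r) ^ 2 - z r / r - lam) (hlam : lam < 0) (hz : z r = 0) : 0 < z' r := by
  simpa [hODE, hz] using hlam

theorem riccati_second_deriv_pos {z z' : ℝ → ℝ} {r : ℝ} (hr : 0 < r) (hz' : z' r ≤ 0)
    (hz : 0 < z r) : 0 < -(2 * z r * z' r) - z' r / r + z r / r ^ 2 := by
  have hquad : 0 ≤ -(2 * z r * z' r) := by nlinarith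
  have hlin : 0 ≤ -(z' r / r) := neg_nonneg.mpr (div_nonpos_of_nonpos_of_nonneg hz' hr.le)
  have hconst : 0 < z r / r ^ 2 := by positivity
  linarith

theorem riccati_strictly_increasing_after_zero_general
    (r₁ r₂ lam : ℝ) (hr₁ : 0 < r₁) (hlam : lam < 0)
    (z z' : ℝ → ℝ)
    (hz : ∀ r ∈ Icc r₁ r₂, HasDerivAt z (z' r) r)
    (hODE : ∀ r ∈ Icc r₁ r₂, z' r = -(z r) ^ 2 - z r / r - lam)
    (ξ : ℝ) (hξ : ξ ∈ Ioo r₁ r₂) (hzξ : z ξ = 0)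
    (hznn : ∀ ρ ∈ Icc ξ r₂, 0 ≤ z ρ) :
    (∀ ρ ∈ Icc ξ r₂, 0 < z' ρ) ∧ StrictMonoOn z (Icc ξ r₂) := by
  have hsub : Icc ξ r₂ ⊆ Icc r₁ r₂ := Icc_subset_Icc hξ.1.le le_rfl
  have hz'' : ∀ r ∈ Icc ξ r₂, HasDerivWithinAt z'
      (-(2 * z r * z' r) - z' r / r + z r / r ^ 2) (Icc ξ r₂) r := fun r hr ↦
    hasDerivWithinAt_of_riccati (fun x hx ↦ hODE x (hsub hx)) hr
      (hr₁.trans_le (hsub hr).1).ne' (hz r (hsub hr))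
  have hz'ξ : 0 < z' ξ :=
    riccati_deriv_pos_of_eq_zero (hODE ξ (hsub (left_mem_Icc.mpr hξ.2.le))) hlam hzξ
  have hpos : ∀ ρ ∈ Icc ξ r₂, 0 < z' ρ := by
    refine pos_on_Icc_of_hasDerivWithinAt_pos_of_nonpos
      (fun r hr ↦ (hz'' r hr).continuousWithinAt) hz'ξ fun ρ hρ hz'ρ ↦ ⟨_, ?_,
        (hz'' ρ (Ioc_subset_Icc_self hρ)).mono (Icc_subset_Icc_right hρ.2)⟩
    have hzρ : 0 < z ρ := (hznn ρ (Ioc_subset_Icc_self hρ)).lt_of_ne fun h ↦ hz'ρ.not_gt <|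
      riccati_deriv_pos_of_eq_zero (hODE ρ (hsub (Ioc_subset_Icc_self hρ))) hlam h.symm
    exact riccati_second_deriv_pos (hr₁.trans (hξ.1.trans hρ.1)) hz'ρ hzρ
  exact ⟨hpos, strictMonoOn_of_hasDerivWithinAt_pos (convex_Icc ξ r₂)
    (fun r hr ↦ (hz r (hsub hr)).continuousAt.continuousWithinAt)
    (fun r hr ↦ (hz r (hsub (interior_subset hr))).hasDerivWithinAt)
    fun r hr ↦ hpos r (interior_subset hr)⟩

/-- if `z` is C¹ with `z' = −z² − z/r − λ` on `[r₁,r₂]`, `z(r₁) = −α`,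
`z(r₂) = α`, and `ξ ∈ (r₁,r₂)` satisfies `z(ξ) = 0` with `z ≥ 0` on `[ξ,r₂]`, then
`z' > 0` on `[ξ,r₂]`; in particular `z` is strictly increasing on `[ξ,r₂]`. -/
theorem riccati_strictly_increasing_after_zero
    (r₁ r₂ lam α : ℝ) (hr₁ : 0 < r₁) (hr : r₁ < r₂) (hlam : lam < 0) (hα : 0 < α)
    (z z' : ℝ → ℝ)
    (hz : ∀ r ∈ Icc r₁ r₂, HasDerivAt z (z' r) r)
    (hz'cont : ContinuousOn z' (Icc r₁ r₂))
    (hODE : ∀ r ∈ Icc r₁ r₂, z' r = -(z r) ^ 2 - z r / r - lam)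
    (hb1 : z r₁ = -α) (hb2 : z r₂ = α)
    (ξ : ℝ) (hξ : ξ ∈ Ioo r₁ r₂) (hzξ : z ξ = 0)
    (hznn : ∀ ρ ∈ Icc ξ r₂, 0 ≤ z ρ) :
    (∀ ρ ∈ Icc ξ r₂, 0 < z' ρ) ∧ StrictMonoOn z (Icc ξ r₂) :=
  riccati_strictly_increasing_after_zero_general r₁ r₂ lam hr₁ hlam z z' hz hODE ξ hξ hzξ hznn
end
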